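/- Let d ≥ 1 and α ∈ (0,1). There exists a constant C = C(α,d) > 0 such that for every smooth function u ∈ C^∞(ℝ^d) ∩ W^{1,1}(ℝ^d), every x ∈ ℝ^d, and every r > 0, one has ∫_{B(x,r)} |u(x) − u(y)| |x−y|^{−(d+1−α)} dy ≤ C ( r^{α} M(|∇u|)(x) + r^{α−1} M(u)(x) ). -/

import Mathlib

open MeasureTheory Metric Set
open scoped ENNReal NNReal

noncomputable section

abbrev Euc (d : ℕ) := EuclideanSpace ℝ (Fin d)

def rieszGamma (d : ℕ) (α : ℝ) : ℝ :=
  Real.pi ^ ((d : ℝ) / 2) * (2 : ℝ) ^ α * Real.Gamma (α / 2) / Real.Gamma (((d : ℝ) - α) / 2)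

/-- Riesz potential of a scalar function. -/
def rieszPotential (d : ℕ) (α : ℝ) (f : Euc d → ℝ) (x : Euc d) : ℝ :=
  (rieszGamma d α)⁻¹ * ∫ y, f y / ‖x - y‖ ^ ((d : ℝ) - α)

/-- Componentwise Riesz potential of a vector field. -/
def rieszPotentialVec (d : ℕ) (α : ℝ) (F : Euc d → Euc d) (x : Euc d) : Euc d :=
  WithLp.toLp 2 (fun i => rieszPotential d α (fun y => F y i) x)

/-- Lorentz quasi-norm via the distribution function. -/
def lorentzNorm (d : ℕ) (q r : ℝ) {X : Type*} [NormedAddCommGroup X]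
    (f : Euc d → X) : ℝ≥0∞ :=
  (ENNReal.ofReal q * ∫⁻ t in Ioi (0 : ℝ),
      ENNReal.ofReal (t ^ (r - 1)) * (volume {x : Euc d | t < ‖f x‖}) ^ (r / q)) ^ (1 / r)

/-- Lorentz quasi-norm of an `ℝ≥0∞`-valued function. -/
def lorentzNormE (d : ℕ) (q r : ℝ) (g : Euc d → ℝ≥0∞) : ℝ≥0∞ :=
  (ENNReal.ofReal q * ∫⁻ t in Ioi (0 : ℝ),
      ENNReal.ofReal (t ^ (r - 1)) *
        (volume {x : Euc d | ENNReal.ofReal t < g x}) ^ (r / q)) ^ (1 / r)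

/-- The nonlinear fractional operator `D^{1-α}`. -/
def fracD (d : ℕ) (α : ℝ) (u : Euc d → ℝ) (x : Euc d) : ℝ≥0∞ :=
  ∫⁻ y, ENNReal.ofReal (|u x - u y| / ‖x - y‖ ^ ((d : ℝ) + 1 - α))

/-- Centered Hardy–Littlewood maximal function. -/
def maximalFn (d : ℕ) (f : Euc d → ℝ) (x : Euc d) : ℝ≥0∞ :=
  ⨆ (r : ℝ) (_ : 0 < r), (volume (ball x r))⁻¹ * ∫⁻ y in ball x r, (‖f y‖₊ : ℝ≥0∞)

def divergence (d : ℕ) (Φ : Euc d → Euc d) (x : Euc d) : ℝ :=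
  ∑ i, fderiv ℝ (fun y => Φ y i) x (EuclideanSpace.single i 1)

/-- Perimeter of a set in the sense of De Giorgi. -/
def perimeter (d : ℕ) (A : Set (Euc d)) : ℝ≥0∞ :=
  ⨆ (Φ : Euc d → Euc d) (_ : ContDiff ℝ 1 Φ ∧ HasCompactSupport Φ ∧ ∀ x, ‖Φ x‖ ≤ 1),
    ENNReal.ofReal (∫ x in A, divergence d Φ x)

end
section Aux
variable {d : ℕ}

lemma euc_nontrivial (hd : 1 ≤ d) : Nontrivial (Euc d) := by
  refine nontrivial_of_ne (EuclideanSpace.single ⟨0, hd⟩ 1) 0 fun h => ?_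
  have := congrArg (fun v : Euc d => v ⟨0, hd⟩) h
  simp [EuclideanSpace.single_apply] at this

lemma scale_bound (g : Euc d → ℝ≥0∞) (hg : Measurable g) (x : Euc d) {t : ℝ} (ht : 0 < t)
    (ρ : ℝ) :
    ∫⁻ y in ball x ρ, g (x + t • (y - x)) ≤
      ENNReal.ofReal ((t ^ d)⁻¹) * ∫⁻ z in ball x (t * ρ), g z := by
  set h : Euc d → ℝ≥0∞ := (ball x (t * ρ)).indicator g with hh
  have hmeas_h : Measurable h := hg.indicator measurableSet_ball
  have hmem : ∀ y ∈ ball x ρ, x + t • (y - x) ∈ ball x (t * ρ) := by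
    intro y hy
    rw [mem_ball, dist_eq_norm] at hy ⊢
    have h1 : x + t • (y - x) - x = t • (y - x) := by abel
    rw [h1, norm_smul, Real.norm_eq_abs, abs_of_pos ht]
    exact mul_lt_mul_of_pos_left hy ht
  have htrans : ∀ c : Euc d, ∫⁻ z, h (c + z) = ∫⁻ z, h z := by
    intro c
    conv_rhs => rw [← map_add_left_eq_self volume c]
    exact (lintegral_map hmeas_h (measurable_const_add c)).symm
  have h1 : ∫⁻ y in ball x ρ, g (x + t • (y - x)) = ∫⁻ y in ball x ρ, h (x + t • (y - x)) :=
    setLIntegral_congr_fun measurableSet_ball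
      (fun y hy => (indicator_of_mem (hmem y hy) g).symm)
  rw [h1]
  refine (setLIntegral_le_lintegral _ _).trans_eq ?_
  have key : ∀ y : Euc d, x + t • (y - x) = (x - t • x) + t • y := by
    intro y; rw [smul_sub]; abel
  simp_rw [key]
  calc ∫⁻ y, h ((x - t • x) + t • y)
      = ∫⁻ z, h ((x - t • x) + z) ∂(Measure.map (fun y : Euc d => t • y) volume) :=
        (lintegral_map (hmeas_h.comp (measurable_const_add _)) (measurable_const_smul t)).symm
    _ = ENNReal.ofReal |(t ^ Module.finrank ℝ (Euc d))⁻¹| * ∫⁻ z, h ((x - t • x) + z) := by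
        rw [Measure.map_addHaar_smul volume ht.ne', lintegral_smul_measure, smul_eq_mul]
    _ = ENNReal.ofReal ((t ^ d)⁻¹) * ∫⁻ z in ball x (t * ρ), g z := by
        rw [htrans, finrank_euclideanSpace_fin, abs_of_nonneg (by positivity), hh,
          lintegral_indicator measurableSet_ball g]

lemma lintegral_ball_le_maximal (f : Euc d → ℝ) (x : Euc d) {s : ℝ} (hs : 0 < s) :
    ∫⁻ z in ball x s, (‖f z‖₊ : ℝ≥0∞) ≤ volume (ball x s) * maximalFn d f x := by
  have hle : (volume (ball x s))⁻¹ * ∫⁻ z in ball x s, (‖f z‖₊ : ℝ≥0∞) ≤ maximalFn d f x :=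
    le_iSup₂ (f := fun r (_ : 0 < r) => (volume (ball x r))⁻¹ * ∫⁻ y in ball x r, (‖f y‖₊ : ℝ≥0∞))
      s hs
  have hv0 : volume (ball x s) ≠ 0 := (measure_ball_pos volume x hs).ne'
  have hvt : volume (ball x s) ≠ ⊤ := measure_ball_lt_top.ne
  calc ∫⁻ z in ball x s, (‖f z‖₊ : ℝ≥0∞)
      = volume (ball x s) * ((volume (ball x s))⁻¹ * ∫⁻ z in ball x s, (‖f z‖₊ : ℝ≥0∞)) := by
        rw [← mul_assoc, ENNReal.mul_inv_cancel hv0 hvt, one_mul]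
    _ ≤ _ := mul_le_mul_right hle _



lemma grad_norm (u : EuclideanSpace ℝ (Fin d) → ℝ) (z : EuclideanSpace ℝ (Fin d)) :
    ‖gradient u z‖ = ‖fderiv ℝ u z‖ := by
  rw [gradient]; exact LinearIsometryEquiv.norm_map _ _

lemma ftc_bound (u : EuclideanSpace ℝ (Fin d) → ℝ) (hu : ContDiff ℝ (⊤ : ℕ∞) u)
    (x y : EuclideanSpace ℝ (Fin d)) {ρ : ℝ} (hy : ‖y - x‖ ≤ ρ) :
    ENNReal.ofReal |u x - u y| ≤
      ∫⁻ t in Ioc (0:ℝ) 1, ENNReal.ofReal (ρ * ‖gradient u (x + t • (y - x))‖) := by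
  have hρ : 0 ≤ ρ := le_trans (norm_nonneg _) hy
  set v := y - x with hv
  set c : ℝ → EuclideanSpace ℝ (Fin d) := fun t => x + t • v with hc
  have hcc : Continuous c := continuous_const.add (continuous_id.smul continuous_const)
  have hdc : ∀ t : ℝ, HasDerivAt c v t := fun t => by
    simpa [hc] using ((hasDerivAt_id t).smul_const v).const_add x
  have hdiff := hu.differentiable (by simp)
  have hder : ∀ t : ℝ, HasDerivAt (fun s => u (c s)) ((fderiv ℝ u (c t)) v) t := fun t =>
    (hdiff (c t)).hasFDerivAt.comp_hasDerivAt t (hdc t)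
  have hfc : Continuous fun t => fderiv ℝ u (c t) :=
    (hu.continuous_fderiv (by simp)).comp hcc
  have hcont : Continuous fun t => (fderiv ℝ u (c t)) v := hfc.clm_apply continuous_const
  have key : u y - u x = ∫ t in (0:ℝ)..1, (fderiv ℝ u (c t)) v := by
    rw [intervalIntegral.integral_eq_sub_of_hasDerivAt (fun t _ => hder t)
      (hcont.intervalIntegrable 0 1)]
    simp [hc, hv]
  set g : ℝ → ℝ := fun t => ρ * ‖fderiv ℝ u (c t)‖ with hg
  have hgc : Continuous g := continuous_const.mul hfc.norm
  have habs : |u x - u y| ≤ ∫ t in Ioc (0:ℝ) 1, g t := by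
    rw [abs_sub_comm, key, ← intervalIntegral.integral_of_le zero_le_one]
    calc |∫ t in (0:ℝ)..1, (fderiv ℝ u (c t)) v|
        ≤ ∫ t in (0:ℝ)..1, |(fderiv ℝ u (c t)) v| :=
          intervalIntegral.abs_integral_le_integral_abs zero_le_one
      _ ≤ ∫ t in (0:ℝ)..1, g t := by
          refine intervalIntegral.integral_mono_on zero_le_one
            (hcont.abs.intervalIntegrable 0 1) (hgc.intervalIntegrable 0 1) fun t _ => ?_
          calc |(fderiv ℝ u (c t)) v| ≤ ‖fderiv ℝ u (c t)‖ * ‖v‖ :=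
                (fderiv ℝ u (c t)).le_opNorm v
            _ ≤ ‖fderiv ℝ u (c t)‖ * ρ := by gcongr
            _ = g t := mul_comm _ _
  calc ENNReal.ofReal |u x - u y| ≤ ENNReal.ofReal (∫ t in Ioc (0:ℝ) 1, g t) :=
        ENNReal.ofReal_le_ofReal habs
    _ = ∫⁻ t in Ioc (0:ℝ) 1, ENNReal.ofReal (g t) :=
        ofReal_integral_eq_lintegral_ofReal hgc.integrableOn_Ioc
          (ae_of_all _ fun t => by positivity)
    _ = _ := by simp_rw [hg, grad_norm, hc]


lemma lemmaA (hd : 1 ≤ d) (u : Euc d → ℝ) (hu : ContDiff ℝ (⊤ : ℕ∞) u) (x : Euc d) {ρ : ℝ}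
    (hρ : 0 < ρ) :
    ∫⁻ y in ball x ρ, ENNReal.ofReal |u x - u y| ≤
      ENNReal.ofReal ρ * (volume (ball x ρ) * maximalFn d (fun z => ‖gradient u z‖) x) := by
  have : Nontrivial (Euc d) := euc_nontrivial hd
  have hgradcont : Continuous fun z : Euc d => gradient u z := by
    unfold gradient
    exact (InnerProductSpace.toDual ℝ (Euc d)).symm.continuous.comp
      (hu.continuous_fderiv (by simp))
  have hgmeas : Measurable fun z : Euc d => ENNReal.ofReal ‖gradient u z‖ :=
    ENNReal.measurable_ofReal.comp hgradcont.norm.measurable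
  set M := maximalFn d (fun z => ‖gradient u z‖) x with hM
  set ω := volume (ball (0 : Euc d) 1) with hω
  have hballvol : ∀ s : ℝ, 0 ≤ s → volume (ball x s) = ENNReal.ofReal (s ^ d) * ω := by
    intro s hs
    rw [hω, Measure.addHaar_ball volume x hs, finrank_euclideanSpace_fin]
  -- step 1 : pointwise FTC bound
  have step1 : ∫⁻ y in ball x ρ, ENNReal.ofReal |u x - u y| ≤
      ∫⁻ y in ball x ρ, ∫⁻ t in Ioc (0:ℝ) 1,
        ENNReal.ofReal ρ * ENNReal.ofReal ‖gradient u (x + t • (y - x))‖ := by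
    refine setLIntegral_mono' measurableSet_ball fun y hy => ?_
    have h1 : ‖y - x‖ ≤ ρ := by
      rw [← dist_eq_norm]; exact (mem_ball.mp hy).le
    refine (ftc_bound u hu x y h1).trans_eq ?_
    simp_rw [ENNReal.ofReal_mul hρ.le]
  refine step1.trans ?_
  -- pull out the constant ρ
  have step2 : ∀ y : Euc d, (∫⁻ t in Ioc (0:ℝ) 1,
      ENNReal.ofReal ρ * ENNReal.ofReal ‖gradient u (x + t • (y - x))‖) =
      ENNReal.ofReal ρ * ∫⁻ t in Ioc (0:ℝ) 1,
        ENNReal.ofReal ‖gradient u (x + t • (y - x))‖ := fun y =>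
    lintegral_const_mul' _ _ ENNReal.ofReal_ne_top
  simp_rw [step2]
  rw [lintegral_const_mul' _ _ ENNReal.ofReal_ne_top]
  refine mul_le_mul_right ?_ _
  -- Tonelli
  have hswap : ∫⁻ y in ball x ρ, ∫⁻ t in Ioc (0:ℝ) 1,
      ENNReal.ofReal ‖gradient u (x + t • (y - x))‖ =
      ∫⁻ t in Ioc (0:ℝ) 1, ∫⁻ y in ball x ρ,
        ENNReal.ofReal ‖gradient u (x + t • (y - x))‖ := by
    apply lintegral_lintegral_swap
    apply Measurable.aemeasurable
    have : Continuous fun p : Euc d × ℝ => x + p.2 • (p.1 - x) :=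
      continuous_const.add (continuous_snd.smul (continuous_fst.sub continuous_const))
    exact ENNReal.measurable_ofReal.comp ((hgradcont.comp this).norm.measurable)
  rw [hswap]
  -- for each t, scale and use the maximal function
  have step3 : ∀ t ∈ Ioc (0:ℝ) 1,
      (∫⁻ y in ball x ρ, ENNReal.ofReal ‖gradient u (x + t • (y - x))‖) ≤
      volume (ball x ρ) * M := by
    intro t ht
    have ht0 : 0 < t := ht.1
    have h1 := scale_bound (fun z => ENNReal.ofReal ‖gradient u z‖) hgmeas x ht0 ρ
    refine h1.trans ?_
    have h2 : ∫⁻ z in ball x (t * ρ), ENNReal.ofReal ‖gradient u z‖ ≤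
        volume (ball x (t * ρ)) * M := by
      have := lintegral_ball_le_maximal (fun z => ‖gradient u z‖) x (mul_pos ht0 hρ)
      simpa [enorm_eq_nnnorm] using this
    refine (mul_le_mul_right h2 _).trans_eq ?_
    rw [hballvol _ (mul_pos ht0 hρ).le, hballvol _ hρ.le, ← mul_assoc, ← mul_assoc,
      ← ENNReal.ofReal_mul (by positivity)]
    congr 3
    rw [mul_pow]
    field_simp
  calc ∫⁻ t in Ioc (0:ℝ) 1, ∫⁻ y in ball x ρ,
        ENNReal.ofReal ‖gradient u (x + t • (y - x))‖
      ≤ ∫⁻ _ in Ioc (0:ℝ) 1, volume (ball x ρ) * M := setLIntegral_mono' measurableSet_Ioc step3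
    _ = volume (ball x ρ) * M := by simp [Real.volume_Ioc]

end Aux

/-- Local part of the pointwise interpolation estimate. -/
theorem pointwise_local_estimate (d : ℕ) (hd : 1 ≤ d)
    (α : ℝ) (hα0 : 0 < α) (hα1 : α < 1) :
    ∃ C : ℝ, 0 < C ∧
      ∀ u : Euc d → ℝ, ContDiff ℝ (⊤ : ℕ∞) u → Integrable u volume →
        Integrable (gradient u) volume → ∀ x : Euc d, ∀ r : ℝ, 0 < r →
          ∫⁻ y in ball x r, ENNReal.ofReal (|u x - u y| / ‖x - y‖ ^ ((d : ℝ) + 1 - α)) ≤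
            ENNReal.ofReal C *
              (ENNReal.ofReal (r ^ α) * maximalFn d (fun y => ‖gradient u y‖) x +
                ENNReal.ofReal (r ^ (α - 1)) * maximalFn d u x) := by
  have : Nontrivial (Euc d) := euc_nontrivial hd
  set β : ℝ := (d : ℝ) + 1 - α with hβ
  have hβpos : 0 < β := by
    have : (0:ℝ) ≤ (d:ℝ) := Nat.cast_nonneg d
    simp only [hβ]
    linarith
  set ω := volume (ball (0 : Euc d) 1) with hω
  have hωt : ω ≠ ⊤ := measure_ball_lt_top.ne
  set q : ℝ≥0∞ := ENNReal.ofReal ((2:ℝ) ^ (-α)) with hq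
  have hq1 : q < 1 := by
    rw [hq, ← ENNReal.ofReal_one]
    exact (ENNReal.ofReal_lt_ofReal_iff one_pos).2
      (Real.rpow_lt_one_of_one_lt_of_neg one_lt_two (neg_lt_zero.2 hα0))
  set K : ℝ≥0∞ := ENNReal.ofReal ((2:ℝ) ^ β) * (1 - q)⁻¹ * ω with hK
  have hKt : K ≠ ⊤ := by
    apply ENNReal.mul_ne_top (ENNReal.mul_ne_top ENNReal.ofReal_ne_top _) hωt
    exact ENNReal.inv_ne_top.2 (tsub_pos_of_lt hq1).ne'
  refine ⟨K.toReal + 1, by positivity, fun u hu hui hgi x r hr => ?_⟩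
  set M := maximalFn d (fun y => ‖gradient u y‖) x with hM
  -- the dyadic radii
  set s : ℕ → ℝ := fun k => (2:ℝ) ^ (-(k:ℝ)) * r with hs
  have hspos : ∀ k, 0 < s k := fun k => mul_pos (Real.rpow_pos_of_pos two_pos _) hr
  have hs0 : s 0 = r := by simp [hs]
  have hshalf : ∀ k, s (k + 1) = s k / 2 := by
    intro k
    show (2:ℝ) ^ (-((k + 1 : ℕ) : ℝ)) * r = (2:ℝ) ^ (-((k : ℕ) : ℝ)) * r / 2
    push_cast
    rw [neg_add, Real.rpow_add two_pos, Real.rpow_neg_one]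
    ring
  have hsmono : ∀ k, s (k+1) ≤ s k := fun k => by
    rw [hshalf k]; linarith [hspos k]
  set A : ℕ → Set (Euc d) := fun k => ball x (s k) \ ball x (s (k + 1)) with hA
  -- covering
  have hsub : ball x r \ {x} ⊆ ⋃ k, A k := by
    intro y hy
    have hd0 : 0 < dist y x := dist_pos.2 (by simpa using hy.2)
    have hex : ∃ k, s (k + 1) ≤ dist y x := by
      have htend : Filter.Tendsto s Filter.atTop (nhds 0) := by
        rw [hs]
        have hval : ∀ k : ℕ, (2:ℝ) ^ (-(k:ℝ)) = ((2:ℝ)⁻¹) ^ k := fun k => by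
          rw [Real.rpow_neg (le_of_lt two_pos), Real.rpow_natCast, inv_pow]
        have h2 : Filter.Tendsto (fun k : ℕ => (2:ℝ) ^ (-(k:ℝ))) Filter.atTop (nhds 0) := by
          simp_rw [hval]
          exact tendsto_pow_atTop_nhds_zero_of_lt_one (by norm_num) (by norm_num)
        simpa using h2.mul_const r
      obtain ⟨k, hk⟩ := (htend.eventually (eventually_lt_nhds hd0)).exists
      exact ⟨k, (hsmono k).trans hk.le⟩
    have hk1 : s (Nat.find hex + 1) ≤ dist y x := Nat.find_spec hex
    have hk2 : dist y x < s (Nat.find hex) := by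
      rcases hnf : Nat.find hex with _ | k'
      · rw [hs0]; exact mem_ball.mp hy.1
      · have hmin := Nat.find_min hex (m := k') (by omega)
        push_neg at hmin
        exact hmin
    exact mem_iUnion.2 ⟨Nat.find hex, mem_ball.mpr hk2,
      fun h => absurd (mem_ball.mp h) (not_lt.2 hk1)⟩
  -- main estimate
  have key : ∫⁻ y in ball x r, ENNReal.ofReal (|u x - u y| / ‖x - y‖ ^ β) ≤
      K * (ENNReal.ofReal (r ^ α) * M) := by
    have hnull : (ball x r : Set (Euc d)) =ᵐ[volume] (ball x r \ {x} : Set (Euc d)) := by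
      refine (diff_ae_eq_self.2 ?_).symm
      exact measure_mono_null inter_subset_right (measure_singleton x)
    calc ∫⁻ y in ball x r, ENNReal.ofReal (|u x - u y| / ‖x - y‖ ^ β)
        = ∫⁻ y in ball x r \ {x}, ENNReal.ofReal (|u x - u y| / ‖x - y‖ ^ β) :=
          setLIntegral_congr hnull
      _ ≤ ∫⁻ y in ⋃ k, A k, ENNReal.ofReal (|u x - u y| / ‖x - y‖ ^ β) :=
          lintegral_mono_set hsub
      _ ≤ ∑' k, ∫⁻ y in A k, ENNReal.ofReal (|u x - u y| / ‖x - y‖ ^ β) :=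
          lintegral_iUnion_le _ _
      _ ≤ ∑' k, ENNReal.ofReal ((2:ℝ)^β) * q ^ k * ENNReal.ofReal (r ^ α) * ω * M := by
          refine ENNReal.tsum_le_tsum fun k => ?_
          -- pointwise kernel bound on the annulus
          have hsk := hspos k
          have hsk1 := hspos (k + 1)
          have hker : ∀ y ∈ A k, ENNReal.ofReal (|u x - u y| / ‖x - y‖ ^ β) ≤
              ENNReal.ofReal ((s (k+1) ^ β)⁻¹) * ENNReal.ofReal |u x - u y| := by
            intro y hy
            have hge : s (k + 1) ≤ ‖x - y‖ := by
              rw [norm_sub_rev, ← dist_eq_norm]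
              exact not_lt.1 fun h => hy.2 (mem_ball.mpr h)
            have hpow : s (k+1) ^ β ≤ ‖x - y‖ ^ β :=
              Real.rpow_le_rpow hsk1.le hge hβpos.le
            have hpowpos : 0 < s (k+1) ^ β := Real.rpow_pos_of_pos hsk1 _
            rw [← ENNReal.ofReal_mul (by positivity)]
            apply ENNReal.ofReal_le_ofReal
            rw [div_eq_inv_mul]
            exact mul_le_mul_of_nonneg_right
              (inv_anti₀ hpowpos hpow) (abs_nonneg _)
          have hbound : ∫⁻ y in A k, ENNReal.ofReal (|u x - u y| / ‖x - y‖ ^ β) ≤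
              ENNReal.ofReal ((s (k+1) ^ β)⁻¹) *
                (ENNReal.ofReal (s k) * (volume (ball x (s k)) * M)) := by
            calc ∫⁻ y in A k, ENNReal.ofReal (|u x - u y| / ‖x - y‖ ^ β)
                ≤ ∫⁻ y in A k, ENNReal.ofReal ((s (k+1) ^ β)⁻¹) * ENNReal.ofReal |u x - u y| :=
                  setLIntegral_mono' (measurableSet_ball.diff measurableSet_ball) hker
              _ = ENNReal.ofReal ((s (k+1) ^ β)⁻¹) * ∫⁻ y in A k, ENNReal.ofReal |u x - u y| :=
                  lintegral_const_mul' _ _ ENNReal.ofReal_ne_top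
              _ ≤ ENNReal.ofReal ((s (k+1) ^ β)⁻¹) *
                    ∫⁻ y in ball x (s k), ENNReal.ofReal |u x - u y| :=
                  mul_le_mul_right (lintegral_mono_set diff_subset) _
              _ ≤ _ := mul_le_mul_right (lemmaA hd u hu x hsk) _
          refine hbound.trans (le_of_eq ?_)
          -- numerical computation
          rw [Measure.addHaar_ball volume x hsk.le, finrank_euclideanSpace_fin, ← hω]
          have hnum : (s (k+1) ^ β)⁻¹ * (s k * (s k ^ d)) = (2:ℝ)^β * ((2:ℝ)^(-α))^k * r^α := by
            have e1 : s (k+1) ^ β = s k ^ β / (2:ℝ) ^ β := by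
              rw [hshalf k, Real.div_rpow hsk.le (le_of_lt two_pos)]
            have e2 : s k * s k ^ d = s k ^ ((d:ℝ) + 1) := by
              rw [Real.rpow_add hsk, Real.rpow_one, Real.rpow_natCast]; ring
            have e3 : s k ^ ((d:ℝ)+1) / s k ^ β = s k ^ α := by
              rw [← Real.rpow_sub hsk]
              congr 1
              rw [hβ]; ring
            have e4 : s k ^ α = ((2:ℝ)^(-α))^k * r ^ α := by
              have h1 : s k = (2:ℝ) ^ (-(k:ℝ)) * r := rfl
              rw [h1, Real.mul_rpow (Real.rpow_pos_of_pos two_pos _).le hr.le,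
                ← Real.rpow_natCast ((2:ℝ)^(-α)) k,
                ← Real.rpow_mul (le_of_lt two_pos), ← Real.rpow_mul (le_of_lt two_pos),
                show -(k:ℝ) * α = -α * (k:ℝ) by ring]
            have e5 : (s k ^ β / (2:ℝ)^β)⁻¹ = (2:ℝ)^β / s k ^ β := inv_div _ _
            calc (s (k+1) ^ β)⁻¹ * (s k * s k ^ d)
                = (s k ^ β / (2:ℝ)^β)⁻¹ * (s k * s k ^ d) := by rw [e1]
              _ = (s k ^ β / (2:ℝ)^β)⁻¹ * s k ^ ((d:ℝ)+1) := by rw [e2]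
              _ = (2:ℝ)^β / s k ^ β * s k ^ ((d:ℝ)+1) := by rw [e5]
              _ = (2:ℝ)^β * (s k ^ ((d:ℝ)+1) / s k ^ β) := by ring
              _ = (2:ℝ)^β * (s k ^ α) := by rw [e3]
              _ = (2:ℝ)^β * (((2:ℝ)^(-α))^k * r ^ α) := by rw [e4]
              _ = (2:ℝ)^β * ((2:ℝ)^(-α))^k * r^α := by ring
          calc ENNReal.ofReal ((s (k+1) ^ β)⁻¹) *
                (ENNReal.ofReal (s k) * (ENNReal.ofReal (s k ^ d) * ω * M))
              = ENNReal.ofReal ((s (k+1) ^ β)⁻¹ * (s k * s k ^ d)) * ω * M := by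
                rw [ENNReal.ofReal_mul (p := (s (k+1) ^ β)⁻¹) (by positivity),
                  ENNReal.ofReal_mul (p := s k) hsk.le]
                ring
            _ = ENNReal.ofReal ((2:ℝ)^β * ((2:ℝ)^(-α))^k * r^α) * ω * M := by rw [hnum]
            _ = ENNReal.ofReal ((2:ℝ)^β) * q ^ k * ENNReal.ofReal (r ^ α) * ω * M := by
                rw [ENNReal.ofReal_mul (by positivity), ENNReal.ofReal_mul (by positivity),
                  hq, ← ENNReal.ofReal_pow (by positivity)]
      _ = K * (ENNReal.ofReal (r ^ α) * M) := by
          rw [ENNReal.tsum_mul_right, ENNReal.tsum_mul_right, ENNReal.tsum_mul_right,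
            ENNReal.tsum_mul_left, ENNReal.tsum_geometric, hK]
          ring
  refine key.trans ?_
  have hCK : K ≤ ENNReal.ofReal (K.toReal + 1) := by
    conv_lhs => rw [← ENNReal.ofReal_toReal hKt]
    exact ENNReal.ofReal_le_ofReal (by linarith)
  calc K * (ENNReal.ofReal (r ^ α) * M)
      ≤ ENNReal.ofReal (K.toReal + 1) * (ENNReal.ofReal (r ^ α) * M) :=
        mul_le_mul_left hCK _
    _ ≤ ENNReal.ofReal (K.toReal + 1) *
        (ENNReal.ofReal (r ^ α) * M + ENNReal.ofReal (r ^ (α - 1)) * maximalFn d u x) :=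
        mul_le_mul_right le_self_add _
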